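/- arXiv:0712.4075 — 5 statements merged into one kernel-verified Lean document; each statement's English description precedes it below -/
import Mathlib

section
/- Let R be a finite ring with q elements, let Γ be a nonempty finite index set with N = |Γ|, let M be a natural number, and let k = (k_α)_{α ∈ R∖{0}} be a family of natural numbers satisfying ∑_{α ∈ R∖{0}} α·k_α = 0 in R (where α·k denotes α added to itself k times) and ∑_{α ∈ R∖{0}} k_α ≤ N. Suppose for each α ∈ R∖{0} we are given nonnegative integers (x_i^{(α)})_{i ∈ Γ} such that (a) ∑_{i ∈ Γ} x_i^{(α)} = k_α · M for every α ∈ R∖{0}, and (b) ∑_{α ∈ R∖{0}} x_i^{(α)} ≤ M for every i ∈ Γ. Then there exist nonnegative integers (w_a)_{a ∈ C_Γ^{(k)}} such that (1) ∑_{a ∈ C_Γ^{(k)}} w_a = M, and (2) for all α ∈ R∖{0} and all i ∈ Γ, x_i^{(α)} = ∑_{a ∈ C_Γ^{(k)}, a_i = α} w_a. -/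
/-- The single-parity-check code over index set `Γ` with prescribed composition `k`:
all vectors `a : Γ → R` with `∑ i, a i = 0` such that, for each nonzero `α ∈ R`,
exactly `k α` coordinates of `a` equal `α`. -/
def Ckf {R : Type*} [Ring R] [Fintype R] [DecidableEq R]
    {Γ : Type*} [Fintype Γ] [DecidableEq Γ]
    (k : {α : R // α ≠ 0} → ℕ) : Finset (Γ → R) :=
  Finset.univ.filter (fun a => (∑ i, a i = 0) ∧
    ∀ α : {α : R // α ≠ 0}, (Finset.univ.filter (fun i => a i = (α : R))).card = k α)

/-!
Adjoin the zero symbol as an extra column: `y i 0 = M - ∑ α, x i α`, with `c 0 = N - ∑ α, k α`.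
The matrix `y` then has all row sums `M` and column sums `c α * M`. Giving each symbol `α`
exactly `c α` slots, Hall's condition holds for the rows (a set `S` of rows carries weight
`#S * M`, which only fits into columns of total weight at least `#S * M`), so there is a word
`a₀` of composition `c` supported on the positive entries of `y`. Subtracting it lowers `M` by
one, and induction decomposes `y` into `M` words of composition `c`. Since
`∑ i, a i = ∑ α, #{i | a i = α} • α`, these are exactly the codewords of `C_Γ^{(k)}`.
-/

open Finset

section ConstantComposition

variable {R Γ : Type*} [Fintype R] [DecidableEq R] [Fintype Γ]

lemma card_fiber_eq_of_injective_sigma {c : R → ℕ} (hc : ∑ α, c α = Fintype.card Γ)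
    {f : Γ → Σ α, Fin (c α)} (hf : f.Injective) (α : R) : #{i | (f i).1 = α} = c α := by
  have hbij : f.Bijective := (Fintype.bijective_iff_injective_and_card f).2 ⟨hf, by simp [hc]⟩
  have hfiber : ({p : Σ α, Fin (c α) | p.1 = α} : Finset _) =
      ({α} : Finset R).sigma fun _ => univ := by
    ext; simp
  rw [card_bijective f hbij (t := {p | p.1 = α}) (by simp), hfiber]
  simp

variable [DecidableEq Γ]

def constantCompositionCode (c : R → ℕ) : Finset (Γ → R) :=
  {a | ∀ α, #{i | a i = α} = c α}

lemma exists_mem_constantCompositionCode_forall_pos {c : R → ℕ}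
    (hc : ∑ α, c α = Fintype.card Γ) {M : ℕ} (hM : 0 < M) {y : Γ → R → ℕ}
    (hrow : ∀ i, ∑ α, y i α = M) (hcol : ∀ α, ∑ i, y i α = c α * M) :
    ∃ a ∈ constantCompositionCode c, ∀ i, 0 < y i (a i) := by
  let t : Γ → Finset (Σ α, Fin (c α)) := fun i => {p | 0 < y i p.1}
  have hall : ∀ S : Finset Γ, #S ≤ #(S.biUnion t) := fun S => by
    set A : Finset R := {α | ∃ i ∈ S, 0 < y i α}
    have hA : S.biUnion t = A.sigma fun _ => univ := by ext; simp [t, A]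
    rw [hA, card_sigma]
    refine Nat.le_of_mul_le_mul_right ?_ hM
    calc #S * M = ∑ α, ∑ i ∈ S, y i α := by rw [sum_comm]; simp [hrow]
      _ = ∑ α ∈ A, ∑ i ∈ S, y i α := by
        refine (sum_filter_of_ne fun α _ hα => ?_).symm
        obtain ⟨i, hi, hyi⟩ := exists_ne_zero_of_sum_ne_zero hα
        exact ⟨i, hi, Nat.pos_of_ne_zero hyi⟩
      _ ≤ ∑ α ∈ A, c α * M := sum_le_sum fun α _ =>
        hcol α ▸ sum_le_sum_of_subset (subset_univ S)
      _ = (∑ α ∈ A, #(univ : Finset (Fin (c α)))) * M := by simp [sum_mul]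
  obtain ⟨f, hf, hft⟩ := (all_card_le_biUnion_card_iff_existsInjective' t).1 hall
  exact ⟨fun i => (f i).1, by simpa [constantCompositionCode] using
    card_fiber_eq_of_injective_sigma hc hf, fun i => by simpa [t] using hft i⟩

theorem exists_weights_constantCompositionCode {c : R → ℕ}
    (hc : ∑ α, c α = Fintype.card Γ) (M : ℕ) (y : Γ → R → ℕ)
    (hrow : ∀ i, ∑ α, y i α = M) (hcol : ∀ α, ∑ i, y i α = c α * M) :
    ∃ w : (Γ → R) → ℕ, ∑ a ∈ constantCompositionCode c, w a = M ∧
      ∀ α i, y i α = ∑ a ∈ constantCompositionCode c with a i = α, w a := by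
  induction M generalizing y with
  | zero =>
    refine ⟨0, by simp, fun α i => ?_⟩
    simpa using (sum_eq_zero_iff.1 (hrow i)) α (mem_univ α)
  | succ M ih =>
    obtain ⟨a₀, ha₀, hpos⟩ :=
      exists_mem_constantCompositionCode_forall_pos hc M.succ_pos hrow hcol
    let δ : Γ → R → ℕ := fun i α => if a₀ i = α then 1 else 0
    have hδy : ∀ i α, δ i α ≤ y i α := fun i α => by
      by_cases h : a₀ i = α
      · simpa [δ, h, Nat.one_le_iff_ne_zero, ← Nat.pos_iff_ne_zero] using h ▸ hpos i
      · simp [δ, h]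
    have hδrow : ∀ i, ∑ α, δ i α = 1 := fun i => by simp [δ]
    have hδcol : ∀ α, ∑ i, δ i α = c α := fun α => by
      simpa [δ, constantCompositionCode] using (mem_filter.1 ha₀).2 α
    obtain ⟨w, hwM, hwy⟩ := ih (fun i α => y i α - δ i α)
      (fun i => by rw [sum_tsub_distrib _ fun α _ => hδy i α, hrow, hδrow]; rfl)
      (fun α => by rw [sum_tsub_distrib _ fun i _ => hδy i α, hcol, hδcol, Nat.mul_succ]; omega)
    refine ⟨w + Pi.single a₀ 1, by simp [sum_add_distrib, hwM, ha₀], fun α i => ?_⟩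
    have hsplit : y i α = (y i α - δ i α) + δ i α := (Nat.sub_add_cancel (hδy i α)).symm
    rw [hsplit, hwy α i]
    simp [sum_add_distrib, δ, ha₀]

end ConstantComposition

section ExtendAtZero

variable {R β : Type*} [Zero R] [DecidableEq R]

def extendAtZero (b : β) (g : {α : R // α ≠ 0} → β) (α : R) : β :=
  if h : α = 0 then b else g ⟨α, h⟩

@[simp]
lemma extendAtZero_zero (b : β) (g : {α : R // α ≠ 0} → β) : extendAtZero b g 0 = b :=
  dif_pos rfl

@[simp]
lemma extendAtZero_coe (b : β) (g : {α : R // α ≠ 0} → β) (α : {α : R // α ≠ 0}) :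
    extendAtZero b g α = g α := dif_neg α.2

lemma forall_iff_zero_and_forall_ne_zero {P : R → Prop} :
    (∀ α, P α) ↔ P 0 ∧ ∀ α : {α : R // α ≠ 0}, P α :=
  ⟨fun h => ⟨h 0, fun α => h α⟩, fun ⟨h0, h⟩ α => if hα : α = 0 then hα ▸ h0 else h ⟨α, hα⟩⟩

lemma sum_extendAtZero [Fintype R] [AddCommMonoid β] (b : β) (g : {α : R // α ≠ 0} → β) :
    ∑ α, extendAtZero b g α = b + ∑ α, g α := by
  rw [Fintype.sum_eq_add_sum_subtype_ne _ 0]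
  simp

end ExtendAtZero

lemma sum_eq_sum_card_fiber_nsmul {Γ R : Type*} [Fintype Γ] [Fintype R] [DecidableEq R]
    [AddCommMonoid R] (a : Γ → R) : ∑ i, a i = ∑ α, #{i | a i = α} • α := by
  simp_rw [← sum_const]
  exact (sum_fiberwise' univ a id).symm

lemma constantCompositionCode_extendAtZero_eq_Ckf {R Γ : Type*} [Ring R] [Fintype R]
    [DecidableEq R] [Fintype Γ] [DecidableEq Γ] {k : {α : R // α ≠ 0} → ℕ}
    (hk0 : ∑ α, k α • (α : R) = 0) :
    constantCompositionCode (extendAtZero (Fintype.card Γ - ∑ α, k α) k) = Ckf (Γ := Γ) k := by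
  ext a
  have hcard : #{i | a i = 0} + ∑ α : {α : R // α ≠ 0}, #{i | a i = α} = Fintype.card Γ := by
    rw [← Fintype.sum_eq_add_sum_subtype_ne (fun α => #{i | a i = α}) 0]
    exact (card_eq_sum_card_fiberwise fun _ _ => mem_univ _).symm
  simp only [constantCompositionCode, Ckf, mem_filter, mem_univ, true_and,
    forall_iff_zero_and_forall_ne_zero (P := fun α => #{i | a i = α} = _), extendAtZero_zero,
    extendAtZero_coe]
  constructor
  · rintro ⟨-, hk⟩
    refine ⟨?_, hk⟩
    rw [sum_eq_sum_card_fiber_nsmul, Fintype.sum_eq_add_sum_subtype_ne _ 0]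
    simp only [smul_zero, zero_add, hk, hk0]
  · rintro ⟨-, hk⟩
    refine ⟨?_, hk⟩
    simp only [hk] at hcard
    omega

theorem proposition_1_general {R : Type*} [Ring R] [Fintype R] [DecidableEq R]
    {Γ : Type*} [Fintype Γ] [DecidableEq Γ]
    (M : ℕ) (k : {α : R // α ≠ 0} → ℕ)
    (hk0 : ∑ α : {α : R // α ≠ 0}, (k α) • (α : R) = 0)
    (hkN : ∑ α : {α : R // α ≠ 0}, k α ≤ Fintype.card Γ)
    (x : Γ → {α : R // α ≠ 0} → ℕ)
    (hx1 : ∀ α : {α : R // α ≠ 0}, ∑ i : Γ, x i α = k α * M)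
    (hx2 : ∀ i : Γ, ∑ α : {α : R // α ≠ 0}, x i α ≤ M) :
    ∃ w : (Γ → R) → ℕ,
      (∑ a ∈ Ckf (Γ := Γ) k, w a = M) ∧
      ∀ α : {α : R // α ≠ 0}, ∀ i : Γ,
        x i α = ∑ a ∈ (Ckf (Γ := Γ) k).filter (fun a => a i = (α : R)), w a := by
  let c := extendAtZero (Fintype.card Γ - ∑ α, k α) k
  let y : Γ → R → ℕ := fun i => extendAtZero (M - ∑ α, x i α) (x i)
  have hc : ∑ α, c α = Fintype.card Γ := by
    rw [sum_extendAtZero]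
    omega
  have hrow : ∀ i, ∑ α, y i α = M := fun i => by
    rw [sum_extendAtZero]
    exact Nat.sub_add_cancel (hx2 i)
  have hcol : ∀ α, ∑ i, y i α = c α * M := by
    refine forall_iff_zero_and_forall_ne_zero.2 ⟨?_, fun α => by simpa [y, c] using hx1 α⟩
    simp only [y, c, extendAtZero_zero]
    rw [sum_tsub_distrib _ fun i _ => hx2 i, sum_comm, sum_const, card_univ, smul_eq_mul,
      Nat.sub_mul, sum_mul, sum_congr rfl fun α _ => hx1 α]
  obtain ⟨w, hwM, hwy⟩ := exists_weights_constantCompositionCode hc M y hrow hcol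
  rw [constantCompositionCode_extendAtZero_eq_Ckf hk0] at hwM hwy
  exact ⟨w, hwM, fun α i => by simpa [y] using hwy α i⟩

/-- **Proposition 1.** Given nonnegative integers `x i α` with column sums `k α * M`
and row sums at most `M`, there exist nonnegative integer weights `w a` on the
constant-composition single-parity-check code `C_Γ^{(k)}` summing to `M` and
recovering each `x i α` as the total weight of codewords with `a i = α`. -/
theorem proposition_1 {R : Type*} [Ring R] [Fintype R] [DecidableEq R]
    {Γ : Type*} [Fintype Γ] [DecidableEq Γ] [Nonempty Γ]
    (M : ℕ) (k : {α : R // α ≠ 0} → ℕ)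
    (hk0 : ∑ α : {α : R // α ≠ 0}, (k α) • (α : R) = 0)
    (hkN : ∑ α : {α : R // α ≠ 0}, k α ≤ Fintype.card Γ)
    (x : Γ → {α : R // α ≠ 0} → ℕ)
    (hx1 : ∀ α : {α : R // α ≠ 0}, ∑ i : Γ, x i α = k α * M)
    (hx2 : ∀ i : Γ, ∑ α : {α : R // α ≠ 0}, x i α ≤ M) :
    ∃ w : (Γ → R) → ℕ,
      (∑ a ∈ Ckf (Γ := Γ) k, w a = M) ∧
      ∀ α : {α : R // α ≠ 0}, ∀ i : Γ,
        x i α = ∑ a ∈ (Ckf (Γ := Γ) k).filter (fun a => a i = (α : R)), w a :=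
  proposition_1_general M k hk0 hkN x hx1 hx2
end

section
/- Let R be a finite ring with q elements and H an m × n parity-check matrix over R. Suppose (f, w) ∈ Q. Define, for all j ∈ J and k ∈ T_j, σ_{j,k} = ∑_{b ∈ C_j, κ_j(b) = k} w_{j,b}, and for all j ∈ J, i ∈ I_j, k ∈ T_j, α ∈ R∖{0}, z_{i,j,k}^{(α)} = ∑_{b ∈ C_j, κ_j(b) = k, b_i = α} w_{j,b}. Then (f, σ, z) ∈ U. In particular, the projection of Q onto the f-coordinates is contained in the projection of U onto the f-coordinates. -/
/-!
Grouping the weights `w_{j,b}` by the composition `κ_j(b)` turns the distribution on local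
codewords into a distribution on compositions, and every constraint of `U` becomes a regrouping
of a sum over `C_j`. Normalisation and the marginals hold because `κ_j` maps `C_j` into `T_j`;
constraint (iii) holds because the number of `i ∈ I_j` with `b_i H_{j,i} = α` is `κ_j(b)_α`;
and (v) holds because for fixed `i` the events `b_i H_{j,i} = α`, `α ≠ 0`, are disjoint.
-/

/-- `supp H j` is the support `I_j` of the `j`-th row of the parity-check matrix `H`. -/
def supp {R : Type*} [Zero R] [DecidableEq R] {m n : ℕ}
    (H : Matrix (Fin m) (Fin n) R) (j : Fin m) : Finset (Fin n) :=
  Finset.univ.filter (fun i => H j i ≠ 0)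

/-- `locC H j` is the local single-parity-check code `C_j`: vectors supported on `I_j`
satisfying `∑_{i ∈ I_j} b i · H j i = 0`. -/
def locC {R : Type*} [Ring R] [Fintype R] [DecidableEq R] {m n : ℕ}
    (H : Matrix (Fin m) (Fin n) R) (j : Fin m) : Finset (Fin n → R) :=
  Finset.univ.filter (fun b =>
    (∀ i, i ∉ supp H j → b i = 0) ∧ ∑ i ∈ supp H j, b i * H j i = 0)

/-- `kappa H j b` is the composition map `κ_j`: for nonzero `α`, the number of
`i ∈ I_j` with `b i · H j i = α`. -/
def kappa {R : Type*} [Ring R] [Fintype R] [DecidableEq R] {m n : ℕ}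
    (H : Matrix (Fin m) (Fin n) R) (j : Fin m) (b : Fin n → R) :
    {α : R // α ≠ 0} → ℕ :=
  fun α => ((supp H j).filter (fun i => b i * H j i = (α : R))).card

/-- `TjSet H j` is the set `T_j` of integer vectors `k = (k_α)_{α ≠ 0}` with
`∑ α, k α • α = 0` in `R` and `∑ α, k α ≤ d_j = |I_j|`. -/
def TjSet {R : Type*} [Ring R] [Fintype R] [DecidableEq R] {m n : ℕ}
    (H : Matrix (Fin m) (Fin n) R) (j : Fin m) : Finset ({α : R // α ≠ 0} → ℕ) :=
  ((Finset.univ : Finset ({α : R // α ≠ 0} → Fin (n + 1))).image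
      (fun g α => (g α : ℕ))).filter
    (fun k => (∑ α : {α : R // α ≠ 0}, (k α) • (α : R)) = 0 ∧
      ∑ α : {α : R // α ≠ 0}, k α ≤ (supp H j).card)

/-- Membership in the polytope `Q` of [FSBG]: `f` together with auxiliary variables
`w = (w_{j,b})_{j, b ∈ C_j}` satisfying nonnegativity, normalization, and marginals. -/
def memQ {R : Type*} [Ring R] [Fintype R] [DecidableEq R] {m n : ℕ}
    (H : Matrix (Fin m) (Fin n) R)
    (f : Fin n → {α : R // α ≠ 0} → ℝ) (w : Fin m → (Fin n → R) → ℝ) : Prop :=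
  (∀ j, ∀ b ∈ locC H j, 0 ≤ w j b) ∧
  (∀ j, ∑ b ∈ locC H j, w j b = 1) ∧
  (∀ j, ∀ i ∈ supp H j, ∀ α : {α : R // α ≠ 0},
    f i α = ∑ b ∈ (locC H j).filter (fun b => b i = (α : R)), w j b)

/-- Membership in the new polytope `U`, defined by constraints (7)-(11) of the paper. -/
def memU {R : Type*} [Ring R] [Fintype R] [DecidableEq R] {m n : ℕ}
    (H : Matrix (Fin m) (Fin n) R)
    (f : Fin n → {α : R // α ≠ 0} → ℝ)
    (σ : Fin m → ({α : R // α ≠ 0} → ℕ) → ℝ)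
    (z : Fin n → Fin m → ({α : R // α ≠ 0} → ℕ) → {α : R // α ≠ 0} → ℝ) : Prop :=
  ∀ j : Fin m,
    (∀ i ∈ supp H j, ∀ α : {α : R // α ≠ 0},
      f i α = ∑ k ∈ TjSet H j, z i j k α) ∧
    (∑ k ∈ TjSet H j, σ j k = 1) ∧
    (∀ k ∈ TjSet H j, ∀ α : {α : R // α ≠ 0},
      ∑ i ∈ supp H j, ∑ β ∈ Finset.univ.filter
          (fun β : {α : R // α ≠ 0} => (β : R) * H j i = (α : R)), z i j k β
        = (k α : ℝ) * σ j k) ∧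
    (∀ i ∈ supp H j, ∀ k ∈ TjSet H j, ∀ α : {α : R // α ≠ 0}, 0 ≤ z i j k α) ∧
    (∀ i ∈ supp H j, ∀ k ∈ TjSet H j,
      ∑ α : {α : R // α ≠ 0}, ∑ β ∈ Finset.univ.filter
          (fun β : {α : R // α ≠ 0} => (β : R) * H j i = (α : R)), z i j k β
        ≤ σ j k)


open Finset

section Fiberwise

variable {R X M : Type*} [DecidableEq R] [Fintype R] [AddCommMonoid M]

theorem sum_filter_subtype_fiberwise {p : R → Prop} [DecidablePred p] (P : R → Prop)
    [DecidablePred P] (s : Finset X) (g : X → R) (w : X → M) :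
    ∑ β ∈ univ.filter (fun β : Subtype p => P β), ∑ x ∈ s.filter (g · = β), w x =
      ∑ x ∈ s.filter (fun x => p (g x) ∧ P (g x)), w x := by
  calc _ = ∑ β ∈ (univ.filter (fun β : Subtype p => P β)).map (.subtype p),
        ∑ x ∈ s.filter (g · = β), w x := (sum_map ..).symm
    _ = _ := by
      rw [sum_fiberwise_eq_sum_filter]
      congr! 2
      simp [and_comm]

theorem sum_subtype_fiberwise {p : R → Prop} [DecidablePred p] (s : Finset X) (g : X → R)
    (w : X → M) :
    ∑ β : Subtype p, ∑ x ∈ s.filter (g · = β), w x = ∑ x ∈ s.filter (fun x => p (g x)), w x := by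
  simpa using sum_filter_subtype_fiberwise (p := p) (fun _ => True) s g w

theorem sum_filter_mul_eq [MulZeroClass R] (s : Finset X) (g : X → R) (h : R)
    (α : {α : R // α ≠ 0}) (w : X → M) :
    ∑ β ∈ univ.filter (fun β : {β : R // β ≠ 0} => (β : R) * h = α),
        ∑ x ∈ s.filter (g · = β), w x =
      ∑ x ∈ s.filter (fun x => g x * h = α), w x := by
  rw [sum_filter_subtype_fiberwise (· * h = α)]
  refine sum_congr (filter_congr fun x _ => and_iff_right_of_imp fun hx hgx => ?_) fun _ _ => rfl
  exact α.2 (by rw [← hx, hgx, zero_mul])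

end Fiberwise

section Composition

variable {R X : Type*} [AddCommMonoid R] [DecidableEq R] [Fintype R]

theorem sum_card_fiber_nsmul_eq_sum (s : Finset X) (g : X → R) :
    ∑ α : {α : R // α ≠ 0}, #(s.filter (g · = α)) • (α : R) = ∑ x ∈ s, g x := by
  calc _ = ∑ α : {α : R // α ≠ 0}, ∑ x ∈ s.filter (g · = α), g x := by
        refine sum_congr rfl fun α _ => ?_
        rw [← sum_const]
        exact sum_congr rfl fun x hx => ((mem_filter.mp hx).2).symm
    _ = ∑ x ∈ s, g x := by rw [sum_subtype_fiberwise, sum_filter_ne_zero]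

theorem sum_card_fiber_le_card (s : Finset X) (g : X → R) :
    ∑ α : {α : R // α ≠ 0}, #(s.filter (g · = α)) ≤ #s := by
  simp only [card_eq_sum_ones, sum_subtype_fiberwise]
  exact sum_le_sum_of_subset (filter_subset _ s)

end Composition

section LocalCode

variable {R : Type*} [Ring R] [Fintype R] [DecidableEq R] {m n : ℕ}
  (H : Matrix (Fin m) (Fin n) R) (j : Fin m)

theorem kappa_mem_TjSet {b : Fin n → R} (hb : b ∈ locC H j) : kappa H j b ∈ TjSet H j := by
  obtain ⟨-, -, hsum⟩ := mem_filter.mp hb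
  have hle : ∀ α, kappa H j b α ≤ n := fun α =>
    (card_filter_le _ _).trans ((card_le_univ _).trans_eq (Fintype.card_fin n))
  refine mem_filter.mpr ⟨mem_image.mpr ⟨fun α => ⟨kappa H j b α, Nat.lt_succ_of_le (hle α)⟩,
    mem_univ _, rfl⟩, ?_, ?_⟩
  · exact (sum_card_fiber_nsmul_eq_sum (supp H j) (fun i => b i * H j i)).trans hsum
  · exact sum_card_fiber_le_card (supp H j) (fun i => b i * H j i)

theorem sum_TjSet_fiberwise {M : Type*} [AddCommMonoid M] {s : Finset (Fin n → R)}
    (hs : s ⊆ locC H j) (w : (Fin n → R) → M) :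
    ∑ k ∈ TjSet H j, ∑ b ∈ s.filter (kappa H j · = k), w b = ∑ b ∈ s, w b :=
  sum_fiberwise_of_maps_to (fun _ hb => kappa_mem_TjSet H j (hs hb)) w

end LocalCode

theorem memU_of_memQ {R : Type*} [Ring R] [Fintype R] [DecidableEq R] {m n : ℕ}
    (H : Matrix (Fin m) (Fin n) R)
    (f : Fin n → {α : R // α ≠ 0} → ℝ) (w : Fin m → (Fin n → R) → ℝ) (hQ : memQ H f w) :
    memU H f
      (fun j k => ∑ b ∈ (locC H j).filter (fun b => kappa H j b = k), w j b)
      (fun i j k α =>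
        ∑ b ∈ (locC H j).filter (fun b => kappa H j b = k ∧ b i = (α : R)), w j b) := by
  obtain ⟨hw_nonneg, hw_sum, hf⟩ := hQ
  intro j
  -- splitting the filter defining `z` lets `sum_filter_mul_eq` collapse the `β`-sums
  simp only [← filter_filter, sum_filter_mul_eq]
  refine ⟨fun i hi α => ?_, ?_, fun k _ α => ?_, fun i _ k _ α => ?_, fun i _ k _ => ?_⟩
  · rw [hf j i hi α, ← sum_TjSet_fiberwise H j (filter_subset _ _)]
    simp only [filter_comm]
  · exact (sum_TjSet_fiberwise H j subset_rfl (w j)).trans (hw_sum j)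
  · rw [sum_comm' (t' := (locC H j).filter (kappa H j · = k))
      (s' := fun b => (supp H j).filter (fun i => b i * H j i = α)) (by simp only [mem_filter]; tauto), mul_sum]
    refine sum_congr rfl fun b hb => ?_
    rw [sum_const, nsmul_eq_mul, ← (mem_filter.mp hb).2]
    rfl
  · exact sum_nonneg fun b hb => hw_nonneg j b (mem_filter.mp (mem_filter.mp hb).1).1
  · rw [sum_subtype_fiberwise]
    exact sum_le_sum_of_subset_of_nonneg (filter_subset _ _)
      fun b hb _ => hw_nonneg j b (mem_filter.mp hb).1

/-- **First part of the proof of Theorem 1.** Given `(f, w) ∈ Q`, the variables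
`σ_{j,k} = ∑_{b ∈ C_j, κ_j(b) = k} w_{j,b}` and
`z_{i,j,k}^{(α)} = ∑_{b ∈ C_j, κ_j(b) = k, b_i = α} w_{j,b}`
place `(f, σ, z)` in `U`; in particular the projection of `Q` onto the
`f`-coordinates is contained in that of `U`. -/
theorem Q_subset_U {R : Type*} [Ring R] [Fintype R] [DecidableEq R] {m n : ℕ}
    (H : Matrix (Fin m) (Fin n) R)
    (f : Fin n → {α : R // α ≠ 0} → ℝ) (w : Fin m → (Fin n → R) → ℝ)
    (hQ : memQ H f w) :
    memU H f
      (fun j k => ∑ b ∈ (locC H j).filter (fun b => kappa H j b = k), w j b)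
      (fun i j k α =>
        ∑ b ∈ (locC H j).filter (fun b => kappa H j b = k ∧ b i = (α : R)), w j b) ∧
    {f : Fin n → {α : R // α ≠ 0} → ℝ | ∃ w, memQ H f w} ⊆
      {f : Fin n → {α : R // α ≠ 0} → ℝ | ∃ σ z, memU H f σ z} := by
  refine ⟨memU_of_memQ H f w hQ, ?_⟩
  rintro f' ⟨w', hw'⟩
  exact ⟨_, _, memU_of_memQ H f' w' hw'⟩
end

section
/- Let R be a finite ring with q elements and H an m × n parity-check matrix over R such that for each j ∈ J and each i ∈ I_j the entry H_{j,i} is a unit of R. Then for each j ∈ J, the image of C_j under the map κ_j is exactly the set T_j = { k ∈ ℕ^{R∖{0}} : ∑_{α∈R∖{0}} α·k_α = 0 in R and ∑_{α∈R∖{0}} k_α ≤ d_j }. -/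

lemma sum_if_eq_self {R : Type*} [Ring R] [Fintype R] [DecidableEq R] (x : R) :
    (∑ α : {α : R // α ≠ 0}, if x = (α : R) then (α : R) else 0) = x := by
  by_cases hx : x = 0
  · subst hx
    apply Finset.sum_eq_zero
    intro α _
    exact if_neg (fun h => α.2 h.symm)
  · rw [Finset.sum_eq_single (⟨x, hx⟩ : {α : R // α ≠ 0})]
    · simp
    · intro β _ hβ
      exact if_neg (fun h => hβ (Subtype.ext h.symm))
    · intro h; exact absurd (Finset.mem_univ _) h

lemma sum_if_one_le {R : Type*} [Ring R] [Fintype R] [DecidableEq R] (x : R) :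
    (∑ α : {α : R // α ≠ 0}, if x = (α : R) then (1 : ℕ) else 0) ≤ 1 := by
  by_cases hx : x = 0
  · subst hx
    refine le_trans (le_of_eq (Finset.sum_eq_zero fun α _ =>
      if_neg (fun h => α.2 h.symm))) (by norm_num)
  · rw [Finset.sum_eq_single (⟨x, hx⟩ : {α : R // α ≠ 0})]
    · simp
    · intro β _ hβ
      exact if_neg (fun h => hβ (Subtype.ext h.symm))
    · intro h; exact absurd (Finset.mem_univ _) h

lemma exists_disjoint_family {ι γ : Type*} [DecidableEq ι] [DecidableEq γ]
    (u : Finset ι) (k : ι → ℕ) :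
    ∀ s : Finset γ, (∑ α ∈ u, k α) ≤ s.card →
    ∃ t : ι → Finset γ, (∀ α ∈ u, t α ⊆ s ∧ (t α).card = k α) ∧
      (∀ α ∈ u, ∀ β ∈ u, α ≠ β → Disjoint (t α) (t β)) := by
  induction u using Finset.induction with
  | empty => exact fun s _ => ⟨fun _ => ∅, by simp, by simp⟩
  | @insert a u ha ih =>
    intro s hs
    rw [Finset.sum_insert ha] at hs
    obtain ⟨t₀, ht₀s, ht₀c⟩ := Finset.exists_subset_card_eq (le_trans (Nat.le_add_right _ _) hs)
    obtain ⟨t', ht'1, ht'2⟩ := ih (s \ t₀) (by rw [Finset.card_sdiff_of_subset ht₀s, ht₀c]; omega)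
    refine ⟨fun α => if α = a then t₀ else t' α, ?_, ?_⟩
    · intro α hα
      by_cases h : α = a
      · subst h; simp [ht₀s, ht₀c]
      · dsimp only; rw [if_neg h]
        rcases Finset.mem_insert.1 hα with h' | h'
        · exact absurd h' h
        · exact ⟨(ht'1 α h').1.trans (Finset.sdiff_subset), (ht'1 α h').2⟩
    · intro α hα β hβ hne
      by_cases h1 : α = a <;> by_cases h2 : β = a
      · exact absurd (h1.trans h2.symm) hne
      · subst h1
        dsimp only; rw [if_pos rfl, if_neg h2]
        have hβu : β ∈ u := (Finset.mem_insert.1 hβ).resolve_left h2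
        exact (Finset.disjoint_sdiff.mono_right (ht'1 β hβu).1)
      · subst h2
        dsimp only; rw [if_pos rfl, if_neg h1]
        have hαu : α ∈ u := (Finset.mem_insert.1 hα).resolve_left h1
        exact (Finset.disjoint_sdiff.mono_right (ht'1 α hαu).1).symm
      · dsimp only; rw [if_neg h1, if_neg h2]
        exact ht'2 α ((Finset.mem_insert.1 hα).resolve_left h1)
          β ((Finset.mem_insert.1 hβ).resolve_left h2) hne


/-- **Surjectivity of `κ_j` onto `T_j`.** If every nonzero entry of the parity-check
matrix `H` is a unit of `R`, then for each row `j` the image of the local code `C_j`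
under the composition map `κ_j` is exactly the set `T_j`. -/
theorem kappa_image_eq_Tj {R : Type*} [Ring R] [Fintype R] [DecidableEq R] {m n : ℕ}
    (H : Matrix (Fin m) (Fin n) R)
    (hunit : ∀ j, ∀ i ∈ supp H j, IsUnit (H j i)) :
    ∀ j : Fin m, (locC H j).image (kappa H j) = TjSet H j := by
  intro j
  have hcard_le : (supp H j).card ≤ n := by
    simpa using Finset.card_le_univ (supp H j)
  ext k
  simp only [TjSet, Finset.mem_filter, Finset.mem_image]
  constructor
  · rintro ⟨b, hb, rfl⟩
    rw [locC, Finset.mem_filter] at hb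
    obtain ⟨-, hb0, hbsum⟩ := hb
    have hle : ∀ α : {α : R // α ≠ 0}, kappa H j b α ≤ (supp H j).card :=
      fun α => Finset.card_filter_le _ _
    refine ⟨⟨fun α => ⟨kappa H j b α, by have := hle α; omega⟩, by simp, rfl⟩, ?_, ?_⟩
    · calc ∑ α : {α : R // α ≠ 0}, (kappa H j b α) • (α : R)
          = ∑ α : {α : R // α ≠ 0}, ∑ i ∈ supp H j,
              (if b i * H j i = (α : R) then (α : R) else 0) := by
            refine Finset.sum_congr rfl fun α _ => ?_
            rw [← Finset.sum_filter, Finset.sum_const]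
            rfl
        _ = ∑ i ∈ supp H j, ∑ α : {α : R // α ≠ 0},
              (if b i * H j i = (α : R) then (α : R) else 0) := Finset.sum_comm
        _ = ∑ i ∈ supp H j, b i * H j i :=
            Finset.sum_congr rfl fun i _ => sum_if_eq_self _
        _ = 0 := hbsum
    · calc ∑ α : {α : R // α ≠ 0}, kappa H j b α
          = ∑ α : {α : R // α ≠ 0}, ∑ i ∈ supp H j,
              (if b i * H j i = (α : R) then (1 : ℕ) else 0) := by
            refine Finset.sum_congr rfl fun α _ => ?_
            rw [← Finset.sum_filter, Finset.sum_const, smul_eq_mul, mul_one]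
            rfl
        _ = ∑ i ∈ supp H j, ∑ α : {α : R // α ≠ 0},
              (if b i * H j i = (α : R) then (1 : ℕ) else 0) := Finset.sum_comm
        _ ≤ ∑ i ∈ supp H j, 1 :=
            Finset.sum_le_sum fun i _ => sum_if_one_le _
        _ = (supp H j).card := by simp
  · rintro ⟨-, hk0, hkle⟩
    obtain ⟨t, ht1, ht2⟩ := exists_disjoint_family (Finset.univ : Finset {α : R // α ≠ 0})
      k (supp H j) (by simpa using hkle)
    have htsub : ∀ α, t α ⊆ supp H j := fun α => (ht1 α (Finset.mem_univ α)).1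
    have htcard : ∀ α, (t α).card = k α := fun α => (ht1 α (Finset.mem_univ α)).2
    have htdisj : ∀ α β, α ≠ β → Disjoint (t α) (t β) :=
      fun α β h => ht2 α (Finset.mem_univ α) β (Finset.mem_univ β) h
    set b : Fin n → R := fun i => ∑ α : {α : R // α ≠ 0},
      if i ∈ t α then (α : R) * Ring.inverse (H j i) else 0 with hbdef
    have hbval : ∀ (α : {α : R // α ≠ 0}) i, i ∈ t α →
        b i = (α : R) * Ring.inverse (H j i) := by
      intro α i hi
      rw [hbdef]
      dsimp only
      rw [Finset.sum_eq_single α]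
      · rw [if_pos hi]
      · intro β _ hβ
        refine if_neg fun hiβ => ?_
        exact (Finset.disjoint_left.1 (htdisj β α hβ) hiβ) hi
      · intro h; exact absurd (Finset.mem_univ _) h
    have hbval0 : ∀ i, (∀ α, i ∉ t α) → b i = 0 := by
      intro i hi
      rw [hbdef]
      exact Finset.sum_eq_zero fun α _ => if_neg (hi α)
    have hinv : ∀ i ∈ supp H j, Ring.inverse (H j i) * H j i = 1 :=
      fun i hi => Ring.inverse_mul_cancel _ (hunit j i hi)
    have hbH : ∀ (α : {α : R // α ≠ 0}) i, i ∈ t α → b i * H j i = (α : R) := by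
      intro α i hi
      rw [hbval α i hi, mul_assoc, hinv i (htsub α hi), mul_one]
    have hmem : b ∈ locC H j := by
      rw [locC, Finset.mem_filter]
      refine ⟨Finset.mem_univ _, fun i hi => hbval0 i fun α hiα => hi (htsub α hiα), ?_⟩
      calc ∑ i ∈ supp H j, b i * H j i
          = ∑ i ∈ supp H j, ∑ α : {α : R // α ≠ 0},
              (if i ∈ t α then (α : R) else 0) := by
            refine Finset.sum_congr rfl fun i hi => ?_
            rw [hbdef]
            dsimp only
            rw [Finset.sum_mul]
            refine Finset.sum_congr rfl fun α _ => ?_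
            by_cases h : i ∈ t α
            · rw [if_pos h, if_pos h, mul_assoc, hinv i hi, mul_one]
            · rw [if_neg h, if_neg h, zero_mul]
        _ = ∑ α : {α : R // α ≠ 0}, ∑ i ∈ supp H j,
              (if i ∈ t α then (α : R) else 0) := Finset.sum_comm
        _ = ∑ α : {α : R // α ≠ 0}, (k α) • (α : R) := by
            refine Finset.sum_congr rfl fun α _ => ?_
            rw [← Finset.sum_filter, Finset.filter_mem_eq_inter,
              Finset.inter_eq_right.2 (htsub α), Finset.sum_const, htcard α]
        _ = 0 := hk0
    refine ⟨b, hmem, ?_⟩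
    funext α
    have hfil : (supp H j).filter (fun i => b i * H j i = (α : R)) = t α := by
      ext i
      simp only [Finset.mem_filter]
      constructor
      · rintro ⟨hi, hval⟩
        by_cases h : ∃ β, i ∈ t β
        · obtain ⟨β, hβ⟩ := h
          have : (β : R) = (α : R) := (hbH β i hβ) ▸ hval
          rwa [Subtype.ext this] at hβ
        · push_neg at h
          rw [hbval0 i h, zero_mul] at hval
          exact absurd hval.symm α.2
      · intro hi
        exact ⟨htsub α hi, hbH α i hi⟩
    rw [kappa, hfil, htcard α]
end

section
/- Let R be a finite ring with q elements, Γ a nonempty finite set, M a positive integer, and k = (k_α)_{α∈R∖{0}} a family of natural numbers with ∑_{α} α·k_α = 0 in R. Suppose for each α ∈ R∖{0} we are given nonnegative integers (x_i^{(α)})_{i∈Γ} satisfying ∑_{i∈Γ} x_i^{(α)} = k_α·M for all α ∈ R∖{0} and ∑_{α∈R∖{0}} x_i^{(α)} ≤ M for all i ∈ Γ. Then there exists a vector a = (a_i)_{i∈Γ} ∈ C_Γ^{(k)} such that for every i ∈ Γ and α ∈ R∖{0}, if a_i = α then x_i^{(α)} > 0. -/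
set_option maxHeartbeats 1000000 in
/-- Existence of a codeword `a ∈ C_Γ^{(k)}` whose support is compatible with the
positive entries of the array `x`: whenever `a i = α ≠ 0`, one has `x i α > 0`. -/
theorem exists_codeword_supported {R : Type*} [Ring R] [Fintype R] [DecidableEq R]
    {Γ : Type*} [Fintype Γ] [DecidableEq Γ] [Nonempty Γ]
    (M : ℕ) (hM : 0 < M) (k : {α : R // α ≠ 0} → ℕ)
    (hk0 : ∑ α : {α : R // α ≠ 0}, (k α) • (α : R) = 0)
    (x : Γ → {α : R // α ≠ 0} → ℕ)
    (hx1 : ∀ α : {α : R // α ≠ 0}, ∑ i : Γ, x i α = k α * M)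
    (hx2 : ∀ i : Γ, ∑ α : {α : R // α ≠ 0}, x i α ≤ M) :
    ∃ a ∈ Ckf (Γ := Γ) k,
      ∀ i : Γ, ∀ α : {α : R // α ≠ 0}, a i = (α : R) → 0 < x i α := by
  classical
  set N : {α : R // α ≠ 0} → Finset Γ := fun α => Finset.univ.filter (fun i => 0 < x i α)
    with hNdef
  -- Hall condition for the bipartite graph slots → indices
  have hall : ∀ s : Finset (Σ α : {α : R // α ≠ 0}, Fin (k α)),
      s.card ≤ (s.biUnion (fun p => N p.1)).card := by
    intro s
    set T := s.image Sigma.fst with hT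
    have h1 : s.card ≤ ∑ α ∈ T, k α := by
      have hsub : s ⊆ T.sigma (fun α => (Finset.univ : Finset (Fin (k α)))) := by
        intro p hp
        rw [Finset.mem_sigma]
        exact ⟨Finset.mem_image_of_mem _ hp, Finset.mem_univ _⟩
      have := Finset.card_le_card hsub
      rwa [Finset.card_sigma, Finset.sum_congr rfl
        (fun α _ => by rw [Finset.card_univ, Fintype.card_fin])] at this
    have h2 : s.biUnion (fun p => N p.1) = T.biUnion N := by
      ext i
      simp only [Finset.mem_biUnion, hT, Finset.mem_image]
      constructor
      · rintro ⟨p, hp, hi⟩; exact ⟨p.1, ⟨p, hp, rfl⟩, hi⟩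
      · rintro ⟨α, ⟨p, hp, rfl⟩, hi⟩; exact ⟨p, hp, hi⟩
    have h3 : (∑ α ∈ T, k α) * M ≤ (T.biUnion N).card * M := by
      calc (∑ α ∈ T, k α) * M = ∑ α ∈ T, k α * M := Finset.sum_mul _ _ _
        _ = ∑ α ∈ T, ∑ i : Γ, x i α := by
            exact Finset.sum_congr rfl (fun α _ => (hx1 α).symm)
        _ = ∑ i : Γ, ∑ α ∈ T, x i α := Finset.sum_comm
        _ = ∑ i ∈ T.biUnion N, ∑ α ∈ T, x i α := by
            symm
            apply Finset.sum_subset (Finset.subset_univ _)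
            intro i _ hi
            apply Finset.sum_eq_zero
            intro α hα
            by_contra hxi
            exact hi (Finset.mem_biUnion.mpr ⟨α, hα, by
              simp only [hNdef, Finset.mem_filter, Finset.mem_univ, true_and]
              exact Nat.pos_of_ne_zero hxi⟩)
        _ ≤ ∑ i ∈ T.biUnion N, M := by
            apply Finset.sum_le_sum
            intro i _
            exact le_trans (Finset.sum_le_sum_of_subset (Finset.subset_univ T)) (hx2 i)
        _ = (T.biUnion N).card * M := by rw [Finset.sum_const, smul_eq_mul]
    rw [h2]
    exact h1.trans (Nat.le_of_mul_le_mul_right h3 hM)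
  have H := Finset.all_card_le_biUnion_card_iff_existsInjective'
    (fun p : (Σ α : {α : R // α ≠ 0}, Fin (k α)) => N p.1)
  obtain ⟨f, hfinj, hf⟩ := H.mp hall
  -- define the codeword
  set a : Γ → R := fun i => if h : ∃ p, f p = i then ((h.choose.1 : {α : R // α ≠ 0}) : R)
    else 0 with hadef
  have ha_f : ∀ p, a (f p) = (p.1 : R) := by
    intro p
    have h : ∃ q, f q = f p := ⟨p, rfl⟩
    have hq : h.choose = p := hfinj h.choose_spec
    simp only [hadef, dif_pos h, hq]
  have hfiber : ∀ α : {α : R // α ≠ 0},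
      Finset.univ.filter (fun i => a i = (α : R)) =
        Finset.univ.image (fun j : Fin (k α) => f ⟨α, j⟩) := by
    intro α
    ext i
    simp only [Finset.mem_filter, Finset.mem_univ, true_and, Finset.mem_image]
    constructor
    · intro hi
      by_cases h : ∃ p, f p = i
      · obtain ⟨⟨β, j⟩, hp⟩ := h
        have hβ : (β : R) = (α : R) := by rw [← hi, ← hp, ha_f]
        have hβα : β = α := Subtype.ext hβ
        subst hβα
        exact ⟨j, hp⟩
      · rw [hadef] at hi
        simp only [dif_neg h] at hi
        exact absurd hi.symm α.2
    · rintro ⟨j, rfl⟩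
      exact ha_f ⟨α, j⟩
  have hcard : ∀ α : {α : R // α ≠ 0},
      (Finset.univ.filter (fun i => a i = (α : R))).card = k α := by
    intro α
    have hinj : Function.Injective (fun j : Fin (k α) => f ⟨α, j⟩) :=
      fun j j' h => by simpa using hfinj h
    rw [hfiber α, Finset.card_image_of_injective _ hinj, Finset.card_univ, Fintype.card_fin]
  have hsum : ∑ i : Γ, a i = 0 := by
    have h1 : ∑ i : Γ, a i = ∑ b : R, ∑ i ∈ Finset.univ.filter (fun i => a i = b), a i :=
      (Finset.sum_fiberwise _ _ _).symm
    have h2 : ∀ b : R, ∑ i ∈ Finset.univ.filter (fun i => a i = b), a i =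
        (Finset.univ.filter (fun i => a i = b)).card • b := by
      intro b
      rw [Finset.sum_congr rfl (fun i hi => (Finset.mem_filter.mp hi).2), Finset.sum_const]
    have hsub : ∑ b ∈ Finset.univ.filter (fun b : R => b ≠ 0),
        (Finset.univ.filter (fun i => a i = b)).card • b =
        ∑ α : {α : R // α ≠ 0}, (Finset.univ.filter (fun i => a i = (α : R))).card • (α : R) :=
      Finset.sum_subtype _ (fun b => by simp) _
    rw [h1, Finset.sum_congr rfl (fun b _ => h2 b),
      ← Finset.sum_filter_of_ne (p := fun b : R => b ≠ 0)
        (fun b _ hb hb0 => hb (by rw [hb0, smul_zero])),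
      hsub, Finset.sum_congr rfl (fun α _ => by rw [hcard α])]
    exact hk0
  refine ⟨a, ?_, ?_⟩
  · rw [Ckf, Finset.mem_filter]
    exact ⟨Finset.mem_univ _, hsum, hcard⟩
  · intro i α hi
    have hmem : i ∈ Finset.univ.filter (fun i => a i = (α : R)) := by
      simp only [Finset.mem_filter, Finset.mem_univ, true_and]; exact hi
    rw [hfiber α] at hmem
    obtain ⟨j, -, hj⟩ := Finset.mem_image.mp hmem
    have := hf ⟨α, j⟩
    simp only [hNdef, Finset.mem_filter, Finset.mem_univ, true_and] at this
    rwa [hj] at this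
end

section
/- Let R be a finite ring with q elements, Γ a nonempty finite set, M a positive integer, and k = (k_α)_{α∈R∖{0}} a family of natural numbers with ∑_{α} α·k_α = 0 in R. Suppose for each α ∈ R∖{0} we are given nonnegative integers (x_i^{(α)})_{i∈Γ} satisfying ∑_{i∈Γ} x_i^{(α)} = k_α·M for all α ∈ R∖{0} and ∑_{α∈R∖{0}} x_i^{(α)} ≤ M for all i ∈ Γ. Then there exists a vector a = (a_i)_{i∈Γ} ∈ C_Γ^{(k)} satisfying simultaneously: (i) for every i ∈ Γ and α ∈ R∖{0}, if a_i = α then x_i^{(α)} > 0; and (ii) for every i ∈ Γ with ∑_{α∈R∖{0}} x_i^{(α)} = M, one has a_i ≠ 0. -/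
/-- Existence of a codeword `a ∈ C_Γ^{(k)}` satisfying simultaneously:
(i) whenever `a i = α ≠ 0`, one has `x i α > 0`; and
(ii) `a i ≠ 0` at every critical index `i`, i.e. whenever `∑ α, x i α = M`. -/
theorem exists_codeword_supported_critical
    {R : Type*} [Ring R] [Fintype R] [DecidableEq R]
    {Γ : Type*} [Fintype Γ] [DecidableEq Γ] [Nonempty Γ]
    (M : ℕ) (hM : 0 < M) (k : {α : R // α ≠ 0} → ℕ)
    (hk0 : ∑ α : {α : R // α ≠ 0}, (k α) • (α : R) = 0)
    (x : Γ → {α : R // α ≠ 0} → ℕ)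
    (hx1 : ∀ α : {α : R // α ≠ 0}, ∑ i : Γ, x i α = k α * M)
    (hx2 : ∀ i : Γ, ∑ α : {α : R // α ≠ 0}, x i α ≤ M) :
    ∃ a ∈ Ckf (Γ := Γ) k,
      (∀ i : Γ, ∀ α : {α : R // α ≠ 0}, a i = (α : R) → 0 < x i α) ∧
      (∀ i : Γ, (∑ α : {α : R // α ≠ 0}, x i α = M) → a i ≠ 0) := by
  classical
  set N := Fintype.card Γ with hN
  -- total composition size is at most |Γ|
  have hkle : (∑ α : {α : R // α ≠ 0}, k α) ≤ N := by
    have h1 : (∑ α : {α : R // α ≠ 0}, k α) * M ≤ N * M := by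
      calc (∑ α : {α : R // α ≠ 0}, k α) * M
          = ∑ α : {α : R // α ≠ 0}, k α * M := Finset.sum_mul _ _ _
        _ = ∑ α : {α : R // α ≠ 0}, ∑ i : Γ, x i α :=
            Finset.sum_congr rfl (fun α _ => (hx1 α).symm)
        _ = ∑ i : Γ, ∑ α : {α : R // α ≠ 0}, x i α := Finset.sum_comm
        _ ≤ ∑ _i : Γ, M := Finset.sum_le_sum (fun i _ => hx2 i)
        _ = N * M := by simp [hN, mul_comm]
    exact Nat.le_of_mul_le_mul_right h1 hM
  set N0 := N - ∑ α : {α : R // α ≠ 0}, k α with hN0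
  -- the slot type
  let ι := (Σ α : {α : R // α ≠ 0}, Fin (k α)) ⊕ Fin N0
  let t : ι → Finset Γ := fun j => match j with
    | .inl ⟨α, _⟩ => Finset.univ.filter (fun i => 0 < x i α)
    | .inr _ => Finset.univ.filter (fun i => ∑ α : {α : R // α ≠ 0}, x i α < M)
  -- Hall's condition
  have hHall : ∀ s : Finset ι, s.card ≤ (s.biUnion t).card := by
    intro s
    -- the set of colors occurring in s
    set A : Finset {α : R // α ≠ 0} := s.biUnion (fun j => match j with
      | .inl ⟨α, _⟩ => {α}
      | .inr _ => ∅) with hA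
    have hmemA : ∀ (α : {α : R // α ≠ 0}) (m : Fin (k α)),
        (Sum.inl ⟨α, m⟩ : ι) ∈ s → α ∈ A := by
      intro α m hm
      rw [hA, Finset.mem_biUnion]
      exact ⟨Sum.inl ⟨α, m⟩, hm, by simp⟩
    have hAmem : ∀ α ∈ A, ∃ m : Fin (k α), (Sum.inl ⟨α, m⟩ : ι) ∈ s := by
      intro α hα
      rw [hA, Finset.mem_biUnion] at hα
      obtain ⟨j, hj, hj2⟩ := hα
      match j with
      | .inl ⟨β, m⟩ =>
          simp only [Finset.mem_singleton] at hj2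
          subst hj2; exact ⟨m, hj⟩
      | .inr m => simp at hj2
    set U : Finset Γ := A.biUnion (fun α => Finset.univ.filter (fun i => 0 < x i α)) with hU
    have hUsub : U ⊆ s.biUnion t := by
      intro i hi
      rw [hU, Finset.mem_biUnion] at hi
      obtain ⟨α, hα, hiα⟩ := hi
      obtain ⟨m, hm⟩ := hAmem α hα
      exact Finset.mem_biUnion.2 ⟨Sum.inl ⟨α, m⟩, hm, hiα⟩
    -- outside U, colors of A have zero weight
    have hUzero : ∀ i : Γ, i ∉ U → ∀ α ∈ A, x i α = 0 := by
      intro i hi α hα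
      by_contra h
      exact hi (Finset.mem_biUnion.2 ⟨α, hα, by simp [Nat.pos_of_ne_zero h]⟩)
    -- key estimate (1): ∑_{α∈A} k α ≤ |U|
    have hkA : (∑ α ∈ A, k α) ≤ U.card := by
      have h1 : (∑ α ∈ A, k α) * M ≤ U.card * M := by
        calc (∑ α ∈ A, k α) * M = ∑ α ∈ A, k α * M := Finset.sum_mul _ _ _
          _ = ∑ α ∈ A, ∑ i : Γ, x i α :=
              Finset.sum_congr rfl (fun α _ => (hx1 α).symm)
          _ = ∑ i : Γ, ∑ α ∈ A, x i α := Finset.sum_comm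
          _ = ∑ i ∈ U, ∑ α ∈ A, x i α := by
              refine (Finset.sum_subset (Finset.subset_univ U) ?_).symm
              intro i _ hi
              exact Finset.sum_eq_zero (fun α hα => hUzero i hi α hα)
          _ ≤ ∑ _i ∈ U, M := Finset.sum_le_sum (fun i _ =>
              le_trans (Finset.sum_le_sum_of_subset (Finset.subset_univ A)) (hx2 i))
          _ = U.card * M := by simp [mul_comm]
      exact Nat.le_of_mul_le_mul_right h1 hM
    -- bound the left part of s by colors
    have hsleft : (s.filter (fun j => j.isLeft)).card ≤ ∑ α ∈ A, k α := by
      have hsub : s.filter (fun j => j.isLeft) ⊆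
          A.biUnion (fun α => (Finset.univ : Finset (Fin (k α))).image
            (fun m => (Sum.inl ⟨α, m⟩ : ι))) := by
        intro j hj
        rw [Finset.mem_filter] at hj
        obtain ⟨hjs, hjl⟩ := hj
        match j with
        | .inl ⟨α, m⟩ =>
            exact Finset.mem_biUnion.2 ⟨α, hmemA α m hjs, by simp⟩
        | .inr m => simp at hjl
      refine le_trans (Finset.card_le_card hsub) ?_
      refine le_trans (Finset.card_biUnion_le) (Finset.sum_le_sum ?_)
      intro α _
      exact le_trans Finset.card_image_le (by simp)
    by_cases hd : ∃ m : Fin N0, (Sum.inr m : ι) ∈ s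
    · -- some dummy slot occurs
      obtain ⟨m0, hm0⟩ := hd
      set Crit : Finset Γ :=
        Finset.univ.filter (fun i => ∑ α : {α : R // α ≠ 0}, x i α = M) with hCrit
      set C' : Finset Γ := Crit \ U with hC'
      -- critical indices outside U are few
      have hC'card : C'.card ≤ ∑ α ∈ Aᶜ, k α := by
        have h1 : C'.card * M ≤ (∑ α ∈ Aᶜ, k α) * M := by
          calc C'.card * M = ∑ _i ∈ C', M := by simp [mul_comm]
            _ = ∑ i ∈ C', ∑ α : {α : R // α ≠ 0}, x i α := by
                refine Finset.sum_congr rfl ?_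
                intro i hi
                rw [hC', Finset.mem_sdiff, hCrit, Finset.mem_filter] at hi
                exact hi.1.2.symm
            _ = ∑ i ∈ C', ∑ α ∈ Aᶜ, x i α := by
                refine Finset.sum_congr rfl ?_
                intro i hi
                rw [hC', Finset.mem_sdiff] at hi
                refine (Finset.sum_subset (Finset.subset_univ Aᶜ) ?_).symm
                intro α _ hα
                simp only [Finset.mem_compl, not_not] at hα
                exact hUzero i hi.2 α hα
            _ ≤ ∑ i : Γ, ∑ α ∈ Aᶜ, x i α :=
                Finset.sum_le_sum_of_subset (Finset.subset_univ C')
            _ = ∑ α ∈ Aᶜ, ∑ i : Γ, x i α := Finset.sum_comm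
            _ = ∑ α ∈ Aᶜ, k α * M :=
                Finset.sum_congr rfl (fun α _ => hx1 α)
            _ = (∑ α ∈ Aᶜ, k α) * M := (Finset.sum_mul _ _ _).symm
        exact Nat.le_of_mul_le_mul_right h1 hM
      -- the biUnion contains U and all non-critical indices
      have hbig : Finset.univ \ C' ⊆ s.biUnion t := by
        intro i hi
        rw [Finset.mem_sdiff, hC', Finset.mem_sdiff] at hi
        by_cases hiU : i ∈ U
        · exact hUsub hiU
        · have : i ∉ Crit := fun h => hi.2 ⟨h, hiU⟩
          rw [hCrit, Finset.mem_filter] at this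
          have hlt : ∑ α : {α : R // α ≠ 0}, x i α < M :=
            lt_of_le_of_ne (hx2 i) (fun h => this ⟨Finset.mem_univ i, h⟩)
          exact Finset.mem_biUnion.2 ⟨Sum.inr m0, hm0, by simp [t, hlt]⟩
      have hbigcard : N - C'.card ≤ (s.biUnion t).card := by
        refine le_trans ?_ (Finset.card_le_card hbig)
        rw [Finset.card_sdiff_of_subset (Finset.subset_univ C')]
        simp [hN]
      -- count s
      have hsplit : s.card = (s.filter (fun j => j.isLeft)).card
          + (s.filter (fun j => ¬ j.isLeft)).card :=
        (Finset.card_filter_add_card_filter_not _).symm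
      have hsright : (s.filter (fun j => ¬ j.isLeft)).card ≤ N0 := by
        have hsub : s.filter (fun j => ¬ j.isLeft) ⊆
            (Finset.univ : Finset (Fin N0)).image (fun m => (Sum.inr m : ι)) := by
          intro j hj
          rw [Finset.mem_filter] at hj
          match j with
          | .inl _ => simp at hj
          | .inr m => simp
        refine le_trans (Finset.card_le_card hsub) (le_trans Finset.card_image_le (by simp))
      have hAsum : (∑ α ∈ A, k α) + (∑ α ∈ Aᶜ, k α) = ∑ α : {α : R // α ≠ 0}, k α :=
        Finset.sum_add_sum_compl A k
      omega
    · -- no dummy slot: s consists of left slots only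
      have hsall : s.filter (fun j => j.isLeft) = s := by
        refine Finset.filter_true_of_mem ?_
        intro j hj
        match j with
        | .inl _ => simp
        | .inr m => exact absurd hj (fun h => hd ⟨m, h⟩)
      calc s.card = (s.filter (fun j => j.isLeft)).card := by rw [hsall]
        _ ≤ ∑ α ∈ A, k α := hsleft
        _ ≤ U.card := hkA
        _ ≤ (s.biUnion t).card := Finset.card_le_card hUsub
  obtain ⟨f, hfinj, hft⟩ := (Finset.all_card_le_biUnion_card_iff_exists_injective t).mp hHall
  have hcard : Fintype.card ι = Fintype.card Γ := by
    simp only [ι, Fintype.card_sum, Fintype.card_sigma, Fintype.card_fin]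
    omega
  have hbij : Function.Bijective f :=
    (Fintype.bijective_iff_injective_and_card f).mpr ⟨hfinj, hcard⟩
  let e : ι ≃ Γ := Equiv.ofBijective f hbij
  let color : ι → R := fun j => match j with
    | .inl ⟨α, _⟩ => (α : R)
    | .inr _ => 0
  set a : Γ → R := fun i => color (e.symm i) with ha
  have hae : ∀ j : ι, a (e j) = color j := by
    intro j; rw [ha]; simp
  have hef : ∀ j : ι, e j = f j := fun j => rfl
  -- key inversion lemma
  have key : ∀ (i : Γ) (α : {α : R // α ≠ 0}), a i = (α : R) →
      ∃ m : Fin (k α), e (Sum.inl ⟨α, m⟩) = i := by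
    intro i α hai
    obtain ⟨j, rfl⟩ := e.surjective i
    rw [hae] at hai
    match j with
    | .inl ⟨β, m⟩ =>
        have hβ : β = α := Subtype.ext hai
        subst hβ
        exact ⟨m, rfl⟩
    | .inr m => exact absurd hai.symm α.2
  have hcount : ∀ α : {α : R // α ≠ 0},
      (Finset.univ.filter (fun i => a i = (α : R))).card = k α := by
    intro α
    have hset : Finset.univ.filter (fun i => a i = (α : R)) =
        (Finset.univ : Finset (Fin (k α))).image (fun m => e (Sum.inl ⟨α, m⟩)) := by
      ext i
      simp only [Finset.mem_filter, Finset.mem_univ, true_and, Finset.mem_image]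
      constructor
      · intro hai
        obtain ⟨m, hm⟩ := key i α hai
        exact ⟨m, hm⟩
      · rintro ⟨m, rfl⟩
        exact hae (Sum.inl ⟨α, m⟩)
    rw [hset, Finset.card_image_of_injective _ ?_, Finset.card_univ, Fintype.card_fin]
    intro m m' hmm
    have h1 := e.injective hmm
    have h2 : (⟨α, m⟩ : Σ α : {α : R // α ≠ 0}, Fin (k α)) = ⟨α, m'⟩ := Sum.inl.inj h1
    exact sigma_mk_injective (β := fun α : {α : R // α ≠ 0} => Fin (k α)) h2
  have hsum : ∑ i : Γ, a i = 0 := by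
    have h1 : ∑ i : Γ, a i = ∑ j : ι, color j := by
      rw [ha]
      exact Equiv.sum_comp e.symm color
    rw [h1]
    rw [Fintype.sum_sum_type]
    have h2 : ∑ σ : (Σ α : {α : R // α ≠ 0}, Fin (k α)), color (Sum.inl σ)
        = ∑ α : {α : R // α ≠ 0}, (k α) • (α : R) := by
      rw [← Finset.univ_sigma_univ, Finset.sum_sigma]
      refine Finset.sum_congr rfl ?_
      intro α _
      simp [color]
    rw [h2, hk0]
    simp [color]
  refine ⟨a, ?_, ?_, ?_⟩
  · rw [Ckf, Finset.mem_filter]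
    exact ⟨Finset.mem_univ a, hsum, hcount⟩
  · intro i α hai
    obtain ⟨m, hm⟩ := key i α hai
    have h1 := hft (Sum.inl ⟨α, m⟩)
    rw [← hef, hm] at h1
    simpa [t] using h1
  · intro i hcrit hai0
    obtain ⟨j, rfl⟩ := e.surjective i
    rw [hae] at hai0
    match j with
    | .inl ⟨β, m⟩ => exact β.2 hai0
    | .inr m =>
        have h1 := hft (Sum.inr m)
        rw [← hef] at h1
        simp only [t, Finset.mem_filter] at h1
        omega
end
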